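/- arXiv:1903.01554 — 2 statements merged into one kernel-verified Lean document; each statement's English description precedes it below -/
import Mathlib

section
/- Fix a, b ∈ ℝ and define F : ℝ² → ℝ⁴ by F(x,y) = e^{ax - by}·(cosh x, sinh x, cos y, sin y). Then with respect to the Minkowski metric g = -dx₀² + dx₁² + dx₂² + dx₃², the induced first fundamental form of F is e^{2(ax - by)}(dx² + dy²); that is, ⟨∂ₓF, ∂ₓF⟩ = ⟨∂_yF, ∂_yF⟩ = e^{2(ax-by)} and ⟨∂ₓF, ∂_yF⟩ = 0, where ⟨u,v⟩ = -u₀v₀ + u₁v₁ + u₂v₂ + u₃v₃. -/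
noncomputable def mink (u v : Fin 4 → ℝ) : ℝ :=
  -(u 0 * v 0) + u 1 * v 1 + u 2 * v 2 + u 3 * v 3

noncomputable def Fimm (a b x y : ℝ) : Fin 4 → ℝ :=
  ![Real.exp (a * x - b * y) * Real.cosh x,
    Real.exp (a * x - b * y) * Real.sinh x,
    Real.exp (a * x - b * y) * Real.cos y,
    Real.exp (a * x - b * y) * Real.sin y]

/-!
Write `F = e^{ax-by} γ` with `γ = (cosh x, sinh x, cos y, sin y)`. Both partial derivatives of `F`
are `e^{ax-by}` times a vector of the form `c γ + γ'`, where `γ` is null and Minkowski-orthogonal to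
`γ_x = (sinh x, cosh x, 0, 0)` and `γ_y = (0, 0, -sin y, cos y)`, which are orthonormal.
Hence the only contributions come from `cosh² - sinh² = 1` and `cos² + sin² = 1`.
-/

open Real

lemma mink_smul_smul (c : ℝ) (u v : Fin 4 → ℝ) : mink (c • u) (c • v) = c ^ 2 * mink u v := by
  simp only [mink, Pi.smul_apply, smul_eq_mul]
  ring

lemma HasDerivAt.deriv_apply {𝕜 ι : Type*} [NontriviallyNormedField 𝕜] [Fintype ι]
    {E : ι → Type*} [∀ i, NormedAddCommGroup (E i)] [∀ i, NormedSpace 𝕜 (E i)]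
    {f : 𝕜 → ∀ i, E i} {f' : ∀ i, E i} {x : 𝕜} (h : HasDerivAt f f' x) (i : ι) :
    _root_.deriv (fun t => f t i) x = f' i :=
  (hasDerivAt_pi.1 h i).deriv

lemma hasDerivAt_Fimm_fst (a b x y : ℝ) :
    HasDerivAt (fun t => Fimm a b t y)
      (exp (a * x - b * y) • ![a * cosh x + sinh x, a * sinh x + cosh x, a * cos y, a * sin y])
      x := by
  have hE : HasDerivAt (fun t => exp (a * t - b * y)) (exp (a * x - b * y) * a) x := by
    simpa using (((hasDerivAt_id x).const_mul a).sub_const (b * y)).exp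
  rw [hasDerivAt_pi]
  intro i
  fin_cases i
  · exact (hE.mul (hasDerivAt_cosh x)).congr_deriv (by simp; ring)
  · exact (hE.mul (hasDerivAt_sinh x)).congr_deriv (by simp; ring)
  · exact (hE.mul_const (cos y)).congr_deriv (by simp; ring)
  · exact (hE.mul_const (sin y)).congr_deriv (by simp; ring)

lemma hasDerivAt_Fimm_snd (a b x y : ℝ) :
    HasDerivAt (fun t => Fimm a b x t)
      (exp (a * x - b * y) • ![-b * cosh x, -b * sinh x, -b * cos y - sin y, -b * sin y + cos y])
      y := by
  have hE : HasDerivAt (fun t => exp (a * x - b * t)) (exp (a * x - b * y) * -b) y := by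
    simpa using (((hasDerivAt_id y).const_mul b).const_sub (a * x)).exp
  rw [hasDerivAt_pi]
  intro i
  fin_cases i
  · exact (hE.mul_const (cosh x)).congr_deriv (by simp; ring)
  · exact (hE.mul_const (sinh x)).congr_deriv (by simp; ring)
  · exact (hE.mul (hasDerivAt_cos y)).congr_deriv (by simp; ring)
  · exact (hE.mul (hasDerivAt_sin y)).congr_deriv (by simp; ring)

theorem first_fundamental_form (a b x y : ℝ) :
    (let Fx : Fin 4 → ℝ := fun i => deriv (fun t => Fimm a b t y i) x
     let Fy : Fin 4 → ℝ := fun i => deriv (fun t => Fimm a b x t i) y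
     mink Fx Fx = Real.exp (2 * (a * x - b * y)) ∧
     mink Fy Fy = Real.exp (2 * (a * x - b * y)) ∧
     mink Fx Fy = 0) := by
  intro Fx Fy
  have hFx : Fx = _ := funext (hasDerivAt_Fimm_fst a b x y).deriv_apply
  have hFy : Fy = _ := funext (hasDerivAt_Fimm_snd a b x y).deriv_apply
  have hexp : exp (2 * (a * x - b * y)) = exp (a * x - b * y) ^ 2 := by
    rw [← exp_nat_mul]; norm_num
  have hch : cosh x ^ 2 - sinh x ^ 2 = 1 := cosh_sq_sub_sinh_sq x
  have htr : sin y ^ 2 + cos y ^ 2 = 1 := sin_sq_add_cos_sq y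
  rw [hFx, hFy, mink_smul_smul, mink_smul_smul, mink_smul_smul, hexp]
  refine ⟨?_, ?_, ?_⟩ <;> simp only [mink, Matrix.cons_val]
  · linear_combination exp (a * x - b * y) ^ 2 * ((1 - a ^ 2) * hch + a ^ 2 * htr)
  · linear_combination exp (a * x - b * y) ^ 2 * (-b ^ 2 * hch + (1 + b ^ 2) * htr)
  · linear_combination exp (a * x - b * y) ^ 2 * (a * b * hch - a * b * htr)
end

section
/- Let ψ ∈ ℂ with sin ψ ≠ 0, cos(ψ/2) ≠ 0, sin(ψ/2) ≠ 0. Identify ℂ⁴ with the complex quaternions ℍ^ℂ = span_ℂ{1, I, J, K} where I² = J² = K² = -1, IJ = K = -JI. Define g(z) = -cos(ψ/2)·sin(z tan(ψ/2))·1 + cos(ψ/2)·cos(z tan(ψ/2))·I + sin(ψ/2)·cos(z cot(ψ/2))·J - sin(ψ/2)·sin(z cot(ψ/2))·K. Then g'(z)·g(z)⁻¹ = cos(β)·J + sin(β)·K where β = -2z·cot(ψ) and g(z)⁻¹ = -cos(ψ/2)·sin(z tan(ψ/2))·1 - cos(ψ/2)·cos(z tan(ψ/2))·I - sin(ψ/2)·cos(z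 cot(ψ/2))·J + sin(ψ/2)·sin(z cot(ψ/2))·K. -/
open Quaternion Complex

noncomputable def g0 (ψ z : ℂ) : ℂ :=
  -(Complex.cos (ψ/2) * Complex.sin (z * (Complex.sin (ψ/2) / Complex.cos (ψ/2))))
noncomputable def g1 (ψ z : ℂ) : ℂ :=
  Complex.cos (ψ/2) * Complex.cos (z * (Complex.sin (ψ/2) / Complex.cos (ψ/2)))
noncomputable def g2 (ψ z : ℂ) : ℂ :=
  Complex.sin (ψ/2) * Complex.cos (z * (Complex.cos (ψ/2) / Complex.sin (ψ/2)))
noncomputable def g3 (ψ z : ℂ) : ℂ :=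
  -(Complex.sin (ψ/2) * Complex.sin (z * (Complex.cos (ψ/2) / Complex.sin (ψ/2))))

noncomputable def gq (ψ z : ℂ) : ℍ[ℂ, -1, -1] := ⟨g0 ψ z, g1 ψ z, g2 ψ z, g3 ψ z⟩

noncomputable def gqInv (ψ z : ℂ) : ℍ[ℂ, -1, -1] :=
  ⟨g0 ψ z, -g1 ψ z, -g2 ψ z, -g3 ψ z⟩

noncomputable def gqDeriv (ψ z : ℂ) : ℍ[ℂ, -1, -1] :=
  ⟨deriv (g0 ψ) z, deriv (g1 ψ) z, deriv (g2 ψ) z, deriv (g3 ψ) z⟩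

/-!
With `c = cos (ψ/2)`, `s = sin (ψ/2)`, `u = z tan (ψ/2)` and `v = z cot (ψ/2)`, the four
coordinates of `g` are `(-c sin u, c cos u, s cos v, -s sin v)`, so `‖g‖² = c² + s² = 1` and the
inverse of `g` is its conjugate. Differentiating gives `g' = (-s cos u, -s sin u, -c sin v, -c cos v)`,
and the angle-addition formulas show `g' = (cos β J + sin β K) g` for `β = u - v`, which equals
`-2 z cot ψ` by the double-angle formulas. Hence `g' g⁻¹ = cos β J + sin β K`.
-/

theorem Complex.hasDerivAt_mul_sin_mul_div {a : ℂ} (ha : a ≠ 0) (b z : ℂ) :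
    HasDerivAt (fun z => a * sin (z * (b / a))) (b * cos (z * (b / a))) z :=
  (((hasDerivAt_sin _).comp z (hasDerivAt_mul_const (b / a))).const_mul a).congr_deriv
    (by field_simp)

theorem Complex.hasDerivAt_mul_cos_mul_div {a : ℂ} (ha : a ≠ 0) (b z : ℂ) :
    HasDerivAt (fun z => a * cos (z * (b / a))) (-(b * sin (z * (b / a)))) z :=
  (((hasDerivAt_cos _).comp z (hasDerivAt_mul_const (b / a))).const_mul a).congr_deriv
    (by field_simp)

theorem Complex.two_mul_cot_eq_cot_half_sub_tan_half {ψ : ℂ} (hc : cos (ψ/2) ≠ 0)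
    (hs : sin (ψ/2) ≠ 0) : 2 * (cos ψ / sin ψ) = cos (ψ/2) / sin (ψ/2) - sin (ψ/2) / cos (ψ/2) := by
  have hψ : ψ = 2 * (ψ/2) := by ring
  rw [hψ, sin_two_mul, cos_two_mul, ← hψ]
  field_simp
  linear_combination sin_sq_add_cos_sq (ψ/2)

theorem gqInv_eq_star (ψ z : ℂ) : gqInv ψ z = star (gq ψ z) := by
  ext <;> simp [gqInv, gq]

theorem gq_mul_gqInv (ψ z : ℂ) : gq ψ z * gqInv ψ z = 1 := by
  have hnorm : (gq ψ z * star (gq ψ z)).re = 1 := by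
    simp only [gq, g0, g1, g2, g3, QuaternionAlgebra.re_mul, QuaternionAlgebra.re_star,
      QuaternionAlgebra.imI_star, QuaternionAlgebra.imJ_star, QuaternionAlgebra.imK_star]
    linear_combination cos (ψ/2) ^ 2 * sin_sq_add_cos_sq (z * (sin (ψ/2) / cos (ψ/2))) +
      sin (ψ/2) ^ 2 * sin_sq_add_cos_sq (z * (cos (ψ/2) / sin (ψ/2))) + sin_sq_add_cos_sq (ψ/2)
  rw [gqInv_eq_star, QuaternionAlgebra.mul_star_eq_coe, hnorm, QuaternionAlgebra.coe_one]

theorem gqDeriv_eq_mul_gq {ψ : ℂ} (hc : cos (ψ/2) ≠ 0) (hs : sin (ψ/2) ≠ 0) (z : ℂ) :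
    gqDeriv ψ z =
      (⟨0, 0, cos (-2 * z * (cos ψ / sin ψ)), sin (-2 * z * (cos ψ / sin ψ))⟩ : ℍ[ℂ, -1, -1]) *
        gq ψ z := by
  set u := z * (sin (ψ/2) / cos (ψ/2))
  set v := z * (cos (ψ/2) / sin (ψ/2))
  have hβ : -2 * z * (cos ψ / sin ψ) = u - v := by
    linear_combination (-z) * two_mul_cot_eq_cot_half_sub_tan_half hc hs
  have h0 : deriv (g0 ψ) z = -(sin (ψ/2) * cos u) := (hasDerivAt_mul_sin_mul_div hc _ z).neg.deriv
  have h1 : deriv (g1 ψ) z = -(sin (ψ/2) * sin u) := (hasDerivAt_mul_cos_mul_div hc _ z).deriv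
  have h2 : deriv (g2 ψ) z = -(cos (ψ/2) * sin v) := (hasDerivAt_mul_cos_mul_div hs _ z).deriv
  have h3 : deriv (g3 ψ) z = -(cos (ψ/2) * cos v) := (hasDerivAt_mul_sin_mul_div hs _ z).neg.deriv
  rw [hβ, cos_sub, sin_sub]
  ext <;> simp only [gqDeriv, gq, g0, g1, g2, g3, h0, h1, h2, h3, QuaternionAlgebra.re_mul,
    QuaternionAlgebra.imI_mul, QuaternionAlgebra.imJ_mul, QuaternionAlgebra.imK_mul]
  · linear_combination sin (ψ/2) * cos u * sin_sq_add_cos_sq v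
  · linear_combination sin (ψ/2) * sin u * sin_sq_add_cos_sq v
  · linear_combination cos (ψ/2) * sin v * sin_sq_add_cos_sq u
  · linear_combination cos (ψ/2) * cos v * sin_sq_add_cos_sq u

theorem gq_deriv_mul_inv_general (ψ : ℂ)
    (hc : Complex.cos (ψ/2) ≠ 0) (hs : Complex.sin (ψ/2) ≠ 0) (z : ℂ) :
    gq ψ z * gqInv ψ z = 1 ∧
    gqDeriv ψ z * gqInv ψ z =
      ⟨0, 0, Complex.cos (-2 * z * (Complex.cos ψ / Complex.sin ψ)),
        Complex.sin (-2 * z * (Complex.cos ψ / Complex.sin ψ))⟩ := by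
  refine ⟨gq_mul_gqInv ψ z, ?_⟩
  rw [gqDeriv_eq_mul_gq hc hs, mul_assoc, gq_mul_gqInv, mul_one]

theorem gq_deriv_mul_inv (ψ : ℂ) (hψ : Complex.sin ψ ≠ 0)
    (hc : Complex.cos (ψ/2) ≠ 0) (hs : Complex.sin (ψ/2) ≠ 0) (z : ℂ) :
    gq ψ z * gqInv ψ z = 1 ∧
    gqDeriv ψ z * gqInv ψ z =
      ⟨0, 0, Complex.cos (-2 * z * (Complex.cos ψ / Complex.sin ψ)),
        Complex.sin (-2 * z * (Complex.cos ψ / Complex.sin ψ))⟩ :=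
  gq_deriv_mul_inv_general ψ hc hs z
end
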